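/- arXiv:1711.09338 — 6 statements merged into one kernel-verified Lean document; each statement's English description precedes it below -/
import Mathlib

section
/- For T ~ IWL(φ,λ) with φ > r (r a positive integer), the r-th moment equals E[T^r] = λ^r (φ+λ−r) / ((λ+φ)(φ−1)(φ−2)⋯(φ−r)). -/
/-!
The substitution `t = 1/y` turns the moment integral into a constant multiple of
`∫₀^∞ y^(φ-r-1) (1 + y) e^(-λy) dy`, a sum of two Gamma integrals equal to
`Γ(φ-r) (λ + φ - r) / λ^(φ-r+1)`; the product in the denominator comes from
`Γ(φ) = (φ-1)(φ-2)⋯(φ-r) Γ(φ-r)`.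
-/

open MeasureTheory

/-- Density of the inverse weighted Lindley (IWL) distribution. -/
noncomputable def iwl (φ lam t : ℝ) : ℝ :=
  lam ^ (φ + 1) / ((φ + lam) * Real.Gamma φ) * t ^ (-φ - 1) * (1 + 1 / t) *
    Real.exp (-lam / t)

open Set Real

lemma Real.Gamma_eq_prod_mul_Gamma_sub_nat (x : ℝ) (n : ℕ)
    (h : ∏ k ∈ Finset.range n, (x - (k + 1)) ≠ 0) :
    Gamma x = (∏ k ∈ Finset.range n, (x - (k + 1))) * Gamma (x - n) := by
  induction n with
  | zero => simp
  | succ n ih =>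
    rw [Finset.prod_range_succ] at h ⊢
    obtain ⟨hprod, hn⟩ := mul_ne_zero_iff.mp h
    have hstep : Gamma (x - n) = (x - (n + 1)) * Gamma (x - (n + 1 : ℕ)) := by
      rw [Nat.cast_succ, ← Gamma_add_one hn]
      ring_nf
    rw [ih hprod, hstep, mul_assoc]

lemma integral_comp_inv_Ioi {E : Type*} [NormedAddCommGroup E] [NormedSpace ℝ E]
    (f : ℝ → E) : ∫ y in Ioi 0, (y ^ 2)⁻¹ • f y⁻¹ = ∫ t in Ioi 0, f t := by
  rw [← integral_comp_rpow_Ioi f (p := -1) (by norm_num)]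
  refine setIntegral_congr_fun measurableSet_Ioi fun y (hy : 0 < y) => ?_
  rw [rpow_neg_one, abs_neg, abs_one, one_mul, show (-1 : ℝ) - 1 = -(2 : ℕ) by norm_num,
    rpow_neg hy.le, rpow_natCast]

lemma integral_rpow_mul_one_add_mul_exp_neg_mul_Ioi {a r : ℝ} (ha : 0 < a) (hr : 0 < r) :
    ∫ y in Ioi 0, y ^ (a - 1) * (1 + y) * exp (-(r * y)) =
      Gamma a * (r + a) / r ^ (a + 1) := by
  have hint {b : ℝ} (hb : 0 < b) :
      IntegrableOn (fun y : ℝ => y ^ (b - 1) * exp (-(r * y))) (Ioi 0) :=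
    .of_integral_ne_zero (by rw [integral_rpow_mul_exp_neg_mul_Ioi hb hr]; positivity)
  have hsplit : ∫ y in Ioi 0, y ^ (a - 1) * (1 + y) * exp (-(r * y)) =
      (∫ y in Ioi 0, y ^ (a - 1) * exp (-(r * y))) +
        ∫ y in Ioi 0, y ^ (a + 1 - 1) * exp (-(r * y)) := by
    rw [← integral_add (hint ha) (hint (by linarith))]
    refine setIntegral_congr_fun measurableSet_Ioi fun y (hy : 0 < y) => ?_
    rw [add_sub_cancel_right, ← sub_add_cancel a 1, rpow_add hy, rpow_one, add_sub_cancel_right]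
    ring
  rw [hsplit, integral_rpow_mul_exp_neg_mul_Ioi ha hr,
    integral_rpow_mul_exp_neg_mul_Ioi (by linarith) hr, Gamma_add_one ha.ne', one_div,
    inv_rpow hr.le, inv_rpow hr.le, rpow_add hr, rpow_one]
  have hra : 0 < r ^ a := rpow_pos_of_pos hr a
  field_simp

lemma inv_sq_mul_inv_pow_mul_iwl_inv (φ lam : ℝ) (r : ℕ) {y : ℝ} (hy : 0 < y) :
    (y ^ 2)⁻¹ * (y⁻¹ ^ r * iwl φ lam y⁻¹) =
      lam ^ (φ + 1) / ((φ + lam) * Gamma φ) *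
        (y ^ (φ - r - 1) * (1 + y) * exp (-(lam * y))) := by
  have hpow : y ^ (φ + 1) = y ^ (φ - r - 1) * (y ^ r * y ^ 2) := by
    rw [← rpow_natCast, ← rpow_natCast, ← rpow_add hy, ← rpow_add hy]
    push_cast
    ring_nf
  simp only [iwl]
  rw [inv_rpow hy.le, ← rpow_neg hy.le, neg_sub_left, neg_neg, add_comm 1 φ, one_div, inv_inv,
    div_inv_eq_mul, neg_mul, hpow, inv_pow]
  field_simp

theorem iwl_moment_general (φ lam : ℝ) (r : ℕ) (hφ : (r : ℝ) < φ)
    (hlam : 0 < lam) :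
    ∫ t in Set.Ioi (0 : ℝ), t ^ r * iwl φ lam t =
      lam ^ r * (φ + lam - r) /
        ((lam + φ) * ∏ k ∈ Finset.range r, (φ - (k + 1))) := by
  have hs : 0 < φ - r := sub_pos.mpr hφ
  have hprod : ∏ k ∈ Finset.range r, (φ - (k + 1)) ≠ 0 :=
    Finset.prod_ne_zero_iff.mpr fun k hk => by
      have : (k : ℝ) + 1 ≤ r := by exact_mod_cast Finset.mem_range.mp hk
      linarith
  rw [← integral_comp_inv_Ioi]
  simp only [smul_eq_mul]
  rw [setIntegral_congr_fun measurableSet_Ioi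
      fun y (hy : 0 < y) => inv_sq_mul_inv_pow_mul_iwl_inv φ lam r hy,
    integral_const_mul, integral_rpow_mul_one_add_mul_exp_neg_mul_Ioi hs hlam,
    Real.Gamma_eq_prod_mul_Gamma_sub_nat φ r hprod]
  have hlam_pow : lam ^ (φ + 1) = lam ^ r * lam ^ (φ - r + 1) := by
    rw [← rpow_natCast, ← rpow_add hlam]
    ring_nf
  have hΓ : 0 < Gamma (φ - r) := Gamma_pos_of_pos hs
  have hlam_rpow : 0 < lam ^ (φ - r + 1) := rpow_pos_of_pos hlam _
  have hlamφ : lam + φ ≠ 0 := by linarith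
  rw [hlam_pow, add_comm φ lam]
  field_simp
  ring

/-- The r-th moment of the IWL distribution, for `φ > r`. -/
theorem iwl_moment (φ lam : ℝ) (r : ℕ) (hr : 1 ≤ r) (hφ : (r : ℝ) < φ)
    (hlam : 0 < lam) :
    ∫ t in Set.Ioi (0 : ℝ), t ^ r * iwl φ lam t =
      lam ^ r * (φ + lam - r) /
        ((lam + φ) * ∏ k ∈ Finset.range r, (φ - (k + 1))) :=
  iwl_moment_general φ lam r hφ hlam
end

section
/- For T ~ IWL(φ,λ), the cumulative distribution function is F(t) = (Γ(φ, λ/t)(λ+φ) + (λ/t)^φ e^(−λ/t)) / ((λ+φ)Γ(φ)) for t > 0, where Γ(φ,x) = ∫ₓ^∞ w^(φ−1) e^(−w) dw is the upper incomplete gamma function. -/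
open MeasureTheory

/-- Upper incomplete gamma function `Γ(a,x) = ∫ₓ^∞ w^(a−1) e^(−w) dw`. -/
noncomputable def upperGamma (a x : ℝ) : ℝ :=
  ∫ w in Set.Ioi x, w ^ (a - 1) * Real.exp (-w)

/-!
Substituting `s = λ / w` turns the CDF into an integral over `w > λ / t`, and the IWL density
becomes `(λ w^(φ-1) + w^φ) e^(-w) / ((φ + λ) Γ(φ))`, i.e. the integrand of
`λ Γ(φ, ·) + Γ(φ + 1, ·)`. Integration by parts, `Γ(φ + 1, x) = φ Γ(φ, x) + x^φ e^(-x)`,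
then gives the closed form.
-/

open Set Filter Real Asymptotics

lemma image_div_Ioi_div {c t : ℝ} (hc : 0 < c) (ht : 0 < t) :
    (fun w : ℝ => c / w) '' Ioi (c / t) = Ioo 0 t := by
  ext s
  constructor
  · rintro ⟨w, hw, rfl⟩
    have hw0 : 0 < w := (div_pos hc ht).trans hw
    exact ⟨div_pos hc hw0, (div_lt_iff₀ hw0).2 ((div_lt_iff₀ ht).1 hw |>.trans_eq (mul_comm _ _))⟩
  · rintro ⟨hs0, hst⟩
    exact ⟨c / s, div_lt_div_of_pos_left hc hs0 hst, div_div_cancel₀ hc.ne'⟩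

theorem integral_Ioo_zero_eq_integral_Ioi_comp_div {E : Type*} [NormedAddCommGroup E]
    [NormedSpace ℝ E] (f : ℝ → E) {c t : ℝ} (hc : 0 < c) (ht : 0 < t) :
    ∫ s in Ioo 0 t, f s = ∫ w in Ioi (c / t), (c / w ^ 2) • f (c / w) := by
  have hpos : ∀ w ∈ Ioi (c / t), 0 < w := fun w hw => (div_pos hc ht).trans hw
  rw [← image_div_Ioi_div hc ht]
  refine (integral_image_eq_integral_abs_deriv_smul measurableSet_Ioi
    (f' := fun w => -(c / w ^ 2)) (fun w hw => ?_) (fun w₁ hw₁ w₂ hw₂ h => ?_) f).trans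
    (setIntegral_congr_fun measurableSet_Ioi fun w _ => ?_)
  · simpa [div_eq_mul_inv, neg_div] using
      ((hasDerivAt_inv (hpos w hw).ne').const_mul c).hasDerivWithinAt
  · have := hpos w₁ hw₁
    have := hpos w₂ hw₂
    field_simp at h
    exact h.symm
  · rw [abs_neg, abs_of_nonneg (by positivity)]

theorem integrableOn_Ioi_rpow_mul_exp_neg (a : ℝ) {x : ℝ} (hx : 0 < x) :
    IntegrableOn (fun w : ℝ => w ^ a * exp (-w)) (Ioi x) := by
  refine integrable_of_isBigO_exp_neg one_half_pos
    (fun w hw => ((continuousAt_rpow_const _ _ (Or.inl (hx.trans_le hw).ne')).mul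
      (continuous_exp.comp continuous_neg).continuousAt).continuousWithinAt) ?_
  have := (isLittleO_rpow_exp_pos_mul_atTop a one_half_pos).isBigO.mul
    (isBigO_refl (fun w : ℝ => exp (-w)) atTop)
  refine this.congr_right fun w => ?_
  rw [← exp_add]
  ring_nf

lemma upperGamma_add_one_eq_integral (a x : ℝ) :
    upperGamma (a + 1) x = ∫ w in Ioi x, w ^ a * exp (-w) := by
  simp only [upperGamma, add_sub_cancel_right]

theorem upperGamma_add_one (a : ℝ) {x : ℝ} (hx : 0 < x) :
    upperGamma (a + 1) x = a * upperGamma a x + x ^ a * exp (-x) := by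
  have hint_a := integrableOn_Ioi_rpow_mul_exp_neg (a - 1) hx
  have hint_a1 := integrableOn_Ioi_rpow_mul_exp_neg a hx
  have hderiv : ∀ w ∈ Ici x, HasDerivAt (fun w : ℝ => -(w ^ a * exp (-w)))
      (w ^ a * exp (-w) - a * (w ^ (a - 1) * exp (-w))) w := by
    intro w hw
    have hpow := hasDerivAt_rpow_const (p := a) (Or.inl (hx.trans_le hw).ne')
    have hexp : HasDerivAt (fun w : ℝ => exp (-w)) (-exp (-w)) w := by
      simpa using (hasDerivAt_neg w).exp
    exact (hpow.mul hexp).neg.congr_deriv (by ring)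
  have hlim : Tendsto (fun w : ℝ => -(w ^ a * exp (-w))) atTop (nhds 0) := by
    simpa using (tendsto_rpow_mul_exp_neg_mul_atTop_nhds_zero a 1 one_pos).neg
  have hftc := integral_Ioi_of_hasDerivAt_of_tendsto' hderiv
    (hint_a1.sub (hint_a.const_mul a)) hlim
  rw [integral_sub hint_a1 (hint_a.const_mul a), integral_const_mul] at hftc
  rw [upperGamma_add_one_eq_integral, upperGamma]
  linarith

theorem div_sq_mul_iwl_div (φ : ℝ) {lam w : ℝ} (hlam : 0 < lam) (hw : 0 < w) :
    lam / w ^ 2 * iwl φ lam (lam / w) =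
      (lam * (w ^ (φ - 1) * exp (-w)) + w ^ φ * exp (-w)) / ((φ + lam) * Gamma φ) := by
  have hpow : (lam / w) ^ (-φ - 1) = w ^ (φ + 1) / lam ^ (φ + 1) := by
    rw [show -φ - 1 = -(φ + 1) by ring, rpow_neg (by positivity), ← inv_rpow (by positivity),
      inv_div, div_rpow hw.le hlam.le]
  have hsq : w ^ (φ + 1) = w ^ (φ - 1) * w ^ 2 := by
    rw [← rpow_natCast, ← rpow_add hw]
    ring_nf
  have hφ : w ^ φ = w ^ (φ - 1) * w := by
    rw [← rpow_add_one hw.ne', sub_add_cancel]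
  have hexp : -lam / (lam / w) = -w := by field_simp
  have : lam ^ (φ + 1) ≠ 0 := by positivity
  rw [iwl, hpow, hsq, hexp, hφ]
  field_simp

theorem iwl_cdf_general (φ lam : ℝ) (hlam : 0 < lam) :
    ∀ t : ℝ, 0 < t →
      ∫ s in Set.Ioo (0 : ℝ) t, iwl φ lam s =
        (upperGamma φ (lam / t) * (lam + φ) +
            (lam / t) ^ φ * Real.exp (-lam / t)) /
          ((lam + φ) * Real.Gamma φ) := by
  intro t ht
  have hx : 0 < lam / t := div_pos hlam ht
  rw [integral_Ioo_zero_eq_integral_Ioi_comp_div _ hlam ht,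
    setIntegral_congr_fun measurableSet_Ioi fun w hw =>
      (smul_eq_mul _ _).trans (div_sq_mul_iwl_div φ hlam (hx.trans hw)),
    integral_div, integral_add ((integrableOn_Ioi_rpow_mul_exp_neg _ hx).const_mul lam)
      (integrableOn_Ioi_rpow_mul_exp_neg _ hx),
    integral_const_mul, ← upperGamma, ← upperGamma_add_one_eq_integral,
    upperGamma_add_one φ hx, neg_div]
  ring

/-- The cumulative distribution function of the IWL distribution. -/
theorem iwl_cdf (φ lam : ℝ) (hφ : 0 < φ) (hlam : 0 < lam) :
    ∀ t : ℝ, 0 < t →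
      ∫ s in Set.Ioo (0 : ℝ) t, iwl φ lam s =
        (upperGamma φ (lam / t) * (lam + φ) +
            (lam / t) ^ φ * Real.exp (-lam / t)) /
          ((lam + φ) * Real.Gamma φ) :=
  iwl_cdf_general φ lam hlam
end

section
/- For T ~ IWL(φ,λ), the survival function is S(t) = (γ(φ, λ/t)(λ+φ) − (λ/t)^φ e^(−λ/t)) / ((λ+φ)Γ(φ)) for t > 0, where γ(φ,x) = ∫₀^x w^(φ−1) e^(−w) dw is the lower incomplete gamma function. -/
/-!
With `x = λ/t`, the claimed survival function is `G(λ/t) / ((λ+φ)Γ(φ))` where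
`G(x) = (λ+φ)γ(φ,x) − x^φ e^(−x)` has `G'(x) = x^(φ−1) e^(−x) (λ + x)`. The chain rule then shows
that it is an antiderivative of `−f`, and it tends to `0` as `t → ∞` because `G(x) → 0` as
`x → 0⁺`. Since `f ≥ 0`, the improper fundamental theorem of calculus needs no separate
integrability argument.
-/

open MeasureTheory

/-- Lower incomplete gamma function `γ(a,x) = ∫₀^x w^(a−1) e^(−w) dw`. -/
noncomputable def lowerGamma (a x : ℝ) : ℝ :=
  ∫ w in Set.Ioo (0 : ℝ) x, w ^ (a - 1) * Real.exp (-w)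

open Real Set Filter Topology

lemma intervalIntegrable_rpow_sub_one_mul_exp_neg {a : ℝ} (ha : 0 < a) {x : ℝ} (hx : 0 ≤ x) :
    IntervalIntegrable (fun w : ℝ => w ^ (a - 1) * exp (-w)) volume 0 x := by
  rw [intervalIntegrable_iff_integrableOn_Ioc_of_le hx]
  exact ((GammaIntegral_convergent ha).mono_set Ioc_subset_Ioi_self).congr_fun
    (fun w _ => mul_comm _ _) measurableSet_Ioc

lemma lowerGamma_eq_intervalIntegral (a : ℝ) {x : ℝ} (hx : 0 ≤ x) :
    lowerGamma a x = ∫ w in (0 : ℝ)..x, w ^ (a - 1) * exp (-w) := by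
  rw [intervalIntegral.integral_of_le hx, lowerGamma, integral_Ioc_eq_integral_Ioo]

lemma hasDerivAt_lowerGamma {a : ℝ} (ha : 0 < a) {x : ℝ} (hx : 0 < x) :
    HasDerivAt (lowerGamma a) (x ^ (a - 1) * exp (-x)) x := by
  have hcont : ContinuousOn (fun w : ℝ => w ^ (a - 1) * exp (-w)) (Ioi 0) :=
    (continuousOn_id.rpow_const fun _ hw => Or.inl (ne_of_gt hw)).mul (by fun_prop)
  refine (intervalIntegral.integral_hasDerivAt_right
    (intervalIntegrable_rpow_sub_one_mul_exp_neg ha hx.le)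
    (hcont.stronglyMeasurableAtFilter isOpen_Ioi x hx)
    (hcont.continuousAt (Ioi_mem_nhds hx))).congr_of_eventuallyEq ?_
  filter_upwards [eventually_gt_nhds hx] with u hu
  exact lowerGamma_eq_intervalIntegral a hu.le

lemma tendsto_lowerGamma_nhdsGT_zero {a : ℝ} (ha : 0 < a) :
    Tendsto (lowerGamma a) (𝓝[>] 0) (𝓝 0) := by
  have hcont := intervalIntegral.continuousOn_primitive_interval'
    (intervalIntegrable_rpow_sub_one_mul_exp_neg ha zero_le_one) (left_mem_uIcc)
  have h0 := (hcont 0 left_mem_uIcc).mono_of_mem_nhdsWithin (s := Ioi 0)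
    (by rw [uIcc_of_le zero_le_one]; exact Icc_mem_nhdsGT zero_lt_one)
  rw [ContinuousWithinAt, intervalIntegral.integral_same] at h0
  refine h0.congr' ?_
  filter_upwards [self_mem_nhdsWithin] with x hx
  exact (lowerGamma_eq_intervalIntegral a (le_of_lt hx)).symm

lemma hasDerivAt_lowerGamma_mul_sub_rpow_mul_exp {a : ℝ} (ha : 0 < a) (c : ℝ) {x : ℝ}
    (hx : 0 < x) :
    HasDerivAt (fun y => lowerGamma a y * (c + a) - y ^ a * exp (-y))
      (x ^ (a - 1) * exp (-x) * (c + x)) x := by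
  have hpow := hasDerivAt_rpow_const (p := a) (Or.inl hx.ne')
  have hexp := (hasDerivAt_neg x).exp
  refine (((hasDerivAt_lowerGamma ha hx).mul_const (c + a)).sub (hpow.mul hexp)).congr_deriv ?_
  rw [rpow_sub_one hx.ne']
  field_simp
  ring

lemma div_rpow_sub_one_mul_sq {x y : ℝ} (hx : 0 < x) (hy : 0 < y) (a : ℝ) :
    (x / y) ^ (a - 1) * (x / y) ^ 2 = x ^ (a + 1) * y ^ (-a - 1) := by
  have hxy : 0 < x / y := div_pos hx hy
  rw [← rpow_natCast, ← rpow_add hxy, div_rpow hx.le hy.le, div_eq_mul_inv, ← rpow_neg hy.le]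
  norm_num
  ring_nf

noncomputable def iwlSurvival (φ lam t : ℝ) : ℝ :=
  (lowerGamma φ (lam / t) * (lam + φ) - (lam / t) ^ φ * exp (-lam / t)) /
    ((lam + φ) * Gamma φ)

lemma hasDerivAt_iwlSurvival {φ lam t : ℝ} (hφ : 0 < φ) (hlam : 0 < lam) (ht : 0 < t) :
    HasDerivAt (iwlSurvival φ lam) (-iwl φ lam t) t := by
  have hinv : HasDerivAt (fun u => lam / u) (-(lam / t ^ 2)) t := by
    simpa [div_eq_mul_inv] using (hasDerivAt_inv ht.ne').const_mul lam
  have h := ((hasDerivAt_lowerGamma_mul_sub_rpow_mul_exp hφ lam (div_pos hlam ht)).comp t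
    hinv).div_const ((lam + φ) * Gamma φ)
  simp only [Function.comp_def, ← neg_div] at h
  refine h.congr_deriv ?_
  rw [iwl, div_mul_eq_mul_div, ← div_rpow_sub_one_mul_sq hlam ht φ]
  field_simp
  ring

lemma tendsto_iwlSurvival_atTop {φ lam : ℝ} (hφ : 0 < φ) (hlam : 0 < lam) :
    Tendsto (iwlSurvival φ lam) atTop (𝓝 0) := by
  have hkernel : Tendsto (fun x => lowerGamma φ x * (lam + φ) - x ^ φ * exp (-x))
      (𝓝[>] 0) (𝓝 0) := by
    have hpow : Tendsto (fun x : ℝ => x ^ φ * exp (-x)) (𝓝[>] 0) (𝓝 0) := by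
      have := (continuousAt_rpow_const 0 φ (Or.inr hφ.le)).tendsto.mul
        (continuous_neg.rexp.tendsto 0)
      simpa [zero_rpow hφ.ne'] using this.mono_left nhdsWithin_le_nhds
    simpa using ((tendsto_lowerGamma_nhdsGT_zero hφ).mul_const (lam + φ)).sub hpow
  have hx : Tendsto (fun t => lam / t) atTop (𝓝[>] 0) :=
    tendsto_nhdsWithin_iff.mpr ⟨tendsto_const_nhds.div_atTop tendsto_id,
      (eventually_gt_atTop 0).mono fun t ht => div_pos hlam ht⟩
  have h := (hkernel.comp hx).div_const ((lam + φ) * Gamma φ)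
  rw [zero_div] at h
  refine h.congr fun t => ?_
  simp [iwlSurvival, neg_div]

lemma iwl_nonneg {φ lam t : ℝ} (hφ : 0 ≤ φ) (hlam : 0 ≤ lam) (ht : 0 ≤ t) :
    0 ≤ iwl φ lam t := by
  unfold iwl
  positivity

/-- The survival function of the IWL distribution. -/
theorem iwl_survival (φ lam : ℝ) (hφ : 0 < φ) (hlam : 0 < lam) :
    ∀ t : ℝ, 0 < t →
      ∫ s in Set.Ioi t, iwl φ lam s =
        (lowerGamma φ (lam / t) * (lam + φ) -
            (lam / t) ^ φ * Real.exp (-lam / t)) /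
          ((lam + φ) * Real.Gamma φ) := by
  intro t ht
  have h := integral_Ioi_of_hasDerivAt_of_nonpos
    (hasDerivAt_iwlSurvival hφ hlam ht).continuousAt.continuousWithinAt
    (fun s hs => hasDerivAt_iwlSurvival hφ hlam (ht.trans hs))
    (fun s hs => neg_nonpos.mpr (iwl_nonneg hφ.le hlam.le (ht.trans hs).le))
    (tendsto_iwlSurvival_atTop hφ hlam)
  rw [integral_neg, zero_sub, neg_inj] at h
  exact h
end

section
/- For all φ > 0 and λ > 0, the function η(t) = (φ+2)/t − 1/(t+1) − λ/t² on (0,∞) has an upside-down bathtub (unimodal) shape: there exists ξ > 0 such that η is increasing on (0,ξ) and decreasing on (ξ,∞). -/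
/-!
Since `η'(t) = u(t) / t³` with `u(t) = t³/(t+1)² - (φ+2) t + 2λ`, the sign of `η'` on `(0, ∞)` is
that of `u`. Because `t²(t+3) < (t+1)³`, we get `u'(t) < 1 - (φ+2) < 0`, so `u` is strictly
decreasing on `[0, ∞)`; it starts at `u(0) = 2λ > 0` and, as `t³/(t+1)² ≤ t`, it is negative once
`(φ+1) t > 2λ`. Its unique zero `ξ` is the mode of `η`.
-/

open Set

theorem strictMonoOn_Ioo_and_strictAntiOn_Ioi_of_hasDerivAt {f f' : ℝ → ℝ} {a ξ : ℝ}
    (hf : ∀ t, a < t → HasDerivAt f (f' t) t) (haξ : a ≤ ξ)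
    (hpos : ∀ t ∈ Ioo a ξ, 0 < f' t) (hneg : ∀ t ∈ Ioi ξ, f' t < 0) :
    StrictMonoOn f (Ioo a ξ) ∧ StrictAntiOn f (Ioi ξ) := by
  constructor
  · refine strictMonoOn_of_hasDerivWithinAt_pos (convex_Ioo a ξ)
      (fun t ht => (hf t ht.1).continuousAt.continuousWithinAt) (fun t ht => ?_)
      (fun t ht => hpos t (interior_subset ht))
    exact (hf t (interior_subset ht).1).hasDerivWithinAt
  · have hlt : ∀ t ∈ Ioi ξ, a < t := fun t ht => haξ.trans_lt ht
    refine strictAntiOn_of_hasDerivWithinAt_neg (convex_Ioi ξ)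
      (fun t ht => (hf t (hlt t ht)).continuousAt.continuousWithinAt) (fun t ht => ?_)
      (fun t ht => hneg t (interior_subset ht))
    exact (hf t (hlt t (interior_subset ht))).hasDerivWithinAt

theorem StrictAntiOn.exists_pos_Ioo_neg_Ioi {u : ℝ → ℝ} {a T : ℝ} (hu : StrictAntiOn u (Ici a))
    (hc : ContinuousOn u (Ici a)) (ha : 0 < u a) (haT : a ≤ T) (hT : u T < 0) :
    ∃ ξ, a < ξ ∧ (∀ t ∈ Ioo a ξ, 0 < u t) ∧ ∀ t ∈ Ioi ξ, u t < 0 := by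
  obtain ⟨ξ, ⟨haξ, -⟩, hξ⟩ :=
    intermediate_value_Ioo' haT (hc.mono Icc_subset_Ici_self) ⟨hT, ha⟩
  refine ⟨ξ, haξ, fun t ht => ?_, fun t ht => ?_⟩
  · exact hξ ▸ hu (mem_Ici.2 ht.1.le) (mem_Ici.2 haξ.le) ht.2
  · exact hξ ▸ hu (mem_Ici.2 haξ.le) (mem_Ici.2 (haξ.trans ht).le) ht

namespace EtaIWL

variable (φ lam : ℝ)

noncomputable def eta (t : ℝ) : ℝ := (φ + 2) / t - 1 / (t + 1) - lam / t ^ 2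

/-- `t³ η'(t)`. -/
noncomputable def etaNum (t : ℝ) : ℝ := t ^ 3 / (t + 1) ^ 2 - (φ + 2) * t + 2 * lam

theorem hasDerivAt_eta {t : ℝ} (ht : 0 < t) :
    HasDerivAt (eta φ lam) (etaNum φ lam t / t ^ 3) t := by
  have ht0 : t ≠ 0 := ht.ne'
  have ht1 : t + 1 ≠ 0 := by positivity
  have h := (((hasDerivAt_const t (φ + 2)).div (hasDerivAt_id t) ht0).sub
    ((hasDerivAt_const t 1).div ((hasDerivAt_id t).add_const 1) ht1)).sub
    ((hasDerivAt_const t lam).div (hasDerivAt_pow 2 t) (pow_ne_zero 2 ht0))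
  refine h.congr_deriv ?_
  simp only [etaNum, id]
  field_simp
  ring

theorem hasDerivAt_etaNum {t : ℝ} (ht : t + 1 ≠ 0) :
    HasDerivAt (etaNum φ lam) (t ^ 2 * (t + 3) / (t + 1) ^ 3 - (φ + 2)) t := by
  have h := (((hasDerivAt_pow 3 t).div (((hasDerivAt_id t).add_const 1).pow 2)
    (pow_ne_zero 2 ht)).sub ((hasDerivAt_id t).const_mul (φ + 2))).add_const (2 * lam)
  refine h.congr_deriv ?_
  simp only [id, Pi.pow_apply]
  field_simp
  ring

theorem strictAntiOn_etaNum (hφ : -1 ≤ φ) : StrictAntiOn (etaNum φ lam) (Ici 0) := by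
  have hd : ∀ t ∈ Ici (0 : ℝ), HasDerivAt (etaNum φ lam)
      (t ^ 2 * (t + 3) / (t + 1) ^ 3 - (φ + 2)) t :=
    fun t ht => hasDerivAt_etaNum φ lam (by have : (0 : ℝ) ≤ t := ht; positivity)
  refine strictAntiOn_of_hasDerivWithinAt_neg (convex_Ici 0)
    (fun t ht => (hd t ht).continuousAt.continuousWithinAt)
    (fun t ht => (hd t (interior_subset ht)).hasDerivWithinAt) (fun t ht => ?_)
  rw [interior_Ici, mem_Ioi] at ht
  have hfrac : t ^ 2 * (t + 3) / (t + 1) ^ 3 < 1 := by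
    rw [div_lt_one (by positivity)]
    nlinarith
  linarith

theorem etaNum_neg {t : ℝ} (hlt : 2 * lam < (φ + 1) * t) (ht : 0 ≤ t) : etaNum φ lam t < 0 := by
  have hle : t ^ 3 / (t + 1) ^ 2 ≤ t := by
    rw [div_le_iff₀ (by positivity)]
    nlinarith [pow_nonneg ht 2]
  simp only [etaNum]
  linarith

end EtaIWL

open EtaIWL

/-- For all `φ > 0`, `λ > 0`, the function `η(t) = (φ+2)/t − 1/(t+1) − λ/t²`
on `(0,∞)` is unimodal (upside-down bathtub shaped): there is a `ξ > 0` such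
that `η` is increasing on `(0,ξ)` and decreasing on `(ξ,∞)`. -/
theorem eta_upside_down_bathtub (φ lam : ℝ) (hφ : 0 < φ) (hlam : 0 < lam) :
    ∃ ξ : ℝ, 0 < ξ ∧
      StrictMonoOn (fun t : ℝ => (φ + 2) / t - 1 / (t + 1) - lam / t ^ 2)
        (Set.Ioo 0 ξ) ∧
      StrictAntiOn (fun t : ℝ => (φ + 2) / t - 1 / (t + 1) - lam / t ^ 2)
        (Set.Ioi ξ) := by
  set T := 2 * lam / (φ + 1) + 1
  have hT : 2 * lam < (φ + 1) * T := by
    rw [mul_add, mul_div_cancel₀ _ (by positivity)]; linarith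
  have hcont : ContinuousOn (etaNum φ lam) (Ici 0) := fun t (ht : 0 ≤ t) =>
    (hasDerivAt_etaNum φ lam (by positivity)).continuousAt.continuousWithinAt
  obtain ⟨ξ, hξ, hpos, hneg⟩ := (strictAntiOn_etaNum φ lam (by linarith)).exists_pos_Ioo_neg_Ioi
    hcont (by simp [etaNum, hlam]) (by positivity) (etaNum_neg φ lam hT (by positivity))
  refine ⟨ξ, hξ, strictMonoOn_Ioo_and_strictAntiOn_Ioi_of_hasDerivAt
    (fun t ht => hasDerivAt_eta φ lam ht) hξ.le (fun t ht => ?_) (fun t ht => ?_)⟩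
  · exact div_pos (hpos t ht) (pow_pos ht.1 3)
  · exact div_neg_of_neg_of_pos (hneg t ht) (pow_pos (hξ.trans ht) 3)
end

section
/- Glaser's lemma: Let T be a positive continuous random variable with twice-differentiable density f, hazard rate h(t) = f(t)/∫ₜ^∞ f(s)ds, and η(t) = −(d/dt) log f(t). If there exists t₀ > 0 such that η is strictly increasing on (0,t₀) and strictly decreasing on (t₀,∞), and limₜ→0⁺ f(t) = 0, then h is upside-down bathtub shaped: there exists t₁ > 0 with h increasing on (0,t₁) and decreasing on (t₁,∞). -/
/-!
With `h = f / S` one has `h' = h (h - η)`, so `h` increases exactly where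
`ψ = f - η S = S (h - η)` is positive. Since `S' = -f` and `f' = -η f`, we get `ψ' = -η' S`:
`ψ` decreases on `(0, t₀]` and increases on `[t₀, ∞)`. If `ψ ≤ 0` near `0`, then `η > 0` and `f`
decreases there, contradicting `f(0⁺) = 0`. If `ψ c > 0` for some `c > t₀`, then `h' ≥ κ h` on
`[c, ∞)` forces `h → ∞`; as `η` is bounded above there, eventually `(1/h)' = η/h - 1 ≤ -1/2`,
contradicting `1/h > 0`. Hence `ψ` changes sign exactly once, at some `t₁ > 0`.
-/

open MeasureTheory Set Filter Topology

theorem hasDerivAt_integral_Ioi {f : ℝ → ℝ} {a t : ℝ} (hf : IntegrableOn f (Ioi a))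
    (hat : a < t) (hft : ContinuousAt f t) :
    HasDerivAt (fun u => ∫ s in Ioi u, f s) (-f t) t := by
  have hF : HasDerivAt (fun u => ∫ s in a..u, f s) (f t) t :=
    intervalIntegral.integral_hasDerivAt_right
      ((intervalIntegrable_iff_integrableOn_Ioc_of_le hat.le).2 (hf.mono_set Ioc_subset_Ioi_self))
      ⟨Ioi a, Ioi_mem_nhds hat, hf.aestronglyMeasurable⟩ hft
  refine (hF.const_sub (∫ s in Ioi a, f s)).congr_of_eventuallyEq ?_
  filter_upwards [Ioi_mem_nhds hat] with u hu
  rw [← intervalIntegral.integral_Ioi_sub_Ioi hf (le_of_lt hu), sub_sub_cancel]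

theorem monotoneOn_of_hasDerivAt_nonneg {g g' : ℝ → ℝ} {D : Set ℝ} (hD : Convex ℝ D)
    (hg : ∀ x ∈ D, HasDerivAt g (g' x) x) (hg' : ∀ x ∈ interior D, 0 ≤ g' x) :
    MonotoneOn g D :=
  monotoneOn_of_hasDerivWithinAt_nonneg hD (fun x hx => (hg x hx).continuousAt.continuousWithinAt)
    (fun x hx => (hg x (interior_subset hx)).hasDerivWithinAt) hg'

theorem antitoneOn_of_hasDerivAt_nonpos {g g' : ℝ → ℝ} {D : Set ℝ} (hD : Convex ℝ D)
    (hg : ∀ x ∈ D, HasDerivAt g (g' x) x) (hg' : ∀ x ∈ interior D, g' x ≤ 0) :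
    AntitoneOn g D :=
  antitoneOn_of_hasDerivWithinAt_nonpos hD (fun x hx => (hg x hx).continuousAt.continuousWithinAt)
    (fun x hx => (hg x (interior_subset hx)).hasDerivWithinAt) hg'

theorem MonotoneOn.deriv_nonneg_of_isOpen {g : ℝ → ℝ} {s : Set ℝ} {x : ℝ} (hg : MonotoneOn g s)
    (hs : IsOpen s) (hx : x ∈ s) : 0 ≤ deriv g x :=
  (derivWithin_of_isOpen (f := g) hs hx).symm ▸ hg.derivWithin_nonneg

theorem AntitoneOn.deriv_nonpos_of_isOpen {g : ℝ → ℝ} {s : Set ℝ} {x : ℝ} (hg : AntitoneOn g s)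
    (hs : IsOpen s) (hx : x ∈ s) : deriv g x ≤ 0 :=
  (derivWithin_of_isOpen (f := g) hs hx).symm ▸ hg.derivWithin_nonpos

theorem mul_sub_le_sub_of_hasDerivAt {g g' : ℝ → ℝ} {a C x : ℝ}
    (hg : ∀ y ∈ Ici a, HasDerivAt g (g' y) y) (hC : ∀ y ∈ Ici a, C ≤ g' y) (hx : x ∈ Ici a) :
    C * (x - a) ≤ g x - g a :=
  (convex_Ici a).mul_sub_le_image_sub_of_le_deriv
    (fun y hy => (hg y hy).continuousAt.continuousWithinAt)
    (fun y hy => (hg y (interior_subset hy)).differentiableAt.differentiableWithinAt)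
    (fun y hy => (hg y (interior_subset hy)).deriv ▸ hC y (interior_subset hy))
    a self_mem_Ici x hx hx.out

theorem exists_sign_change_of_antitoneOn {g : ℝ → ℝ} {b t₀ : ℝ} (hb : b ∈ Ioc 0 t₀)
    (hgb : 0 < g b) (hg : AntitoneOn g (Ioc 0 t₀)) (htail : ∀ t, t₀ < t → g t ≤ 0) :
    ∃ t₁, 0 < t₁ ∧ (∀ t ∈ Ioo 0 t₁, 0 < g t) ∧ ∀ t, t₁ < t → g t ≤ 0 := by
  set P := {t ∈ Ioc 0 t₀ | 0 < g t}
  have hP : BddAbove P := ⟨t₀, fun t ht => ht.1.2⟩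
  have hbP : b ∈ P := ⟨hb, hgb⟩
  refine ⟨sSup P, hb.1.trans_le (le_csSup hP hbP), fun t ht => ?_, fun t ht => ?_⟩
  · obtain ⟨s, ⟨hs, hgs⟩, hts⟩ := exists_lt_of_lt_csSup ⟨b, hbP⟩ ht.2
    exact hgs.trans_le (hg ⟨ht.1, hts.le.trans hs.2⟩ hs hts.le)
  · by_contra! hgt
    rcases le_or_gt t t₀ with htt₀ | htt₀
    · exact ht.not_ge (le_csSup hP ⟨⟨hb.1.trans_le ((le_csSup hP hbP).trans ht.le), htt₀⟩, hgt⟩)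
    · exact hgt.not_ge (htail t htt₀)

theorem not_tendsto_zero_of_antitoneOn {f : ℝ → ℝ} {t₀ : ℝ} (ht₀ : 0 < t₀)
    (hpos : ∀ t ∈ Ioo 0 t₀, 0 < f t) (hf : AntitoneOn f (Ioo 0 t₀)) :
    ¬Tendsto f (𝓝[>] 0) (𝓝 0) := by
  intro hlim
  have hmid : t₀ / 2 ∈ Ioo 0 t₀ := ⟨by positivity, by linarith⟩
  have hbound : ∀ᶠ t in 𝓝[>] 0, f (t₀ / 2) ≤ f t := by
    filter_upwards [Ioo_mem_nhdsGT hmid.1] with t ht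
    exact hf ⟨ht.1, ht.2.trans hmid.2⟩ hmid ht.2.le
  exact (hpos _ hmid).not_ge (ge_of_tendsto hlim hbound)

theorem mul_sub_le_sub_of_hasDerivAt_ge_mul {g g' : ℝ → ℝ} {a κ x : ℝ} (hκ : 0 ≤ κ)
    (hpos : ∀ y ∈ Ici a, 0 < g y) (hg : ∀ y ∈ Ici a, HasDerivAt g (g' y) y)
    (hge : ∀ y ∈ Ici a, κ * g y ≤ g' y) (hx : x ∈ Ici a) :
    κ * g a * (x - a) ≤ g x - g a := by
  have hmono : MonotoneOn g (Ici a) := monotoneOn_of_hasDerivAt_nonneg (convex_Ici a) hg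
    fun y hy => (mul_nonneg hκ (hpos y (interior_subset hy)).le).trans (hge y (interior_subset hy))
  refine mul_sub_le_sub_of_hasDerivAt hg (fun y hy => ?_) hx
  exact (mul_le_mul_of_nonneg_left (hmono self_mem_Ici hy hy) hκ).trans (hge y hy)

theorem exists_nonpos_of_hasDerivAt_le_neg {g g' : ℝ → ℝ} {a ε : ℝ} (hε : 0 < ε)
    (hg : ∀ y ∈ Ici a, HasDerivAt g (g' y) y) (hle : ∀ y ∈ Ici a, g' y ≤ -ε) :
    ∃ x ∈ Ici a, g x ≤ 0 := by
  set x := a + max (g a) 0 / ε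
  have hx : x ∈ Ici a := le_add_of_nonneg_right (div_nonneg (le_max_right _ _) hε.le)
  have hdecay : g x + ε * (x - a) ≤ g a := by
    simpa using mul_sub_le_sub_of_hasDerivAt (fun y hy => (hg y hy).neg)
      (fun y hy => le_neg_of_le_neg (hle y hy)) hx
  have hεx : ε * (x - a) = max (g a) 0 := by simp only [x]; field_simp; ring
  exact ⟨x, hx, by linarith [le_max_left (g a) 0]⟩

theorem hasDerivAt_of_eq_neg_deriv_log {f η : ℝ → ℝ} {t : ℝ} (hft : f t ≠ 0)
    (hfd : DifferentiableAt ℝ f t) (hη : η t = -deriv (fun s => Real.log (f s)) t) :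
    HasDerivAt f (-(η t * f t)) t := by
  refine hfd.hasDerivAt.congr_deriv ?_
  rw [hη, deriv.log hfd hft]
  field_simp

theorem differentiableAt_of_eq_neg_deriv_log {f η : ℝ → ℝ} {s : Set ℝ} (hs : IsOpen s)
    (hf : ContDiffOn ℝ 2 f s) (hne : ∀ t ∈ s, f t ≠ 0)
    (hη : ∀ t ∈ s, η t = -deriv (fun u => Real.log (f u)) t) {t : ℝ} (ht : t ∈ s) :
    DifferentiableAt ℝ η t := by
  have hfd : ∀ u ∈ s, DifferentiableAt ℝ f u := fun u hu =>
    (hf.differentiableOn two_ne_zero).differentiableAt (hs.mem_nhds hu)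
  have hf'd : DifferentiableAt ℝ (deriv f) t :=
    ((hf.deriv_of_isOpen hs (m := 1) (by norm_num)).differentiableOn one_ne_zero).differentiableAt
      (hs.mem_nhds ht)
  refine ((hf'd.div (hfd t ht) (hne t ht)).neg).congr_of_eventuallyEq ?_
  filter_upwards [hs.mem_nhds ht] with u hu
  rw [hη u hu, deriv.log (hfd u hu) (hne u hu)]
  rfl

section Hazard

variable {f S η : ℝ → ℝ}

theorem hasDerivAt_hazard {t : ℝ} (hf : HasDerivAt f (-(η t * f t)) t)
    (hS : HasDerivAt S (-f t) t) (hSt : S t ≠ 0) :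
    HasDerivAt (fun u => f u / S u) (f t / S t * ((f t - η t * S t) / S t)) t := by
  refine (hf.div hS hSt).congr_deriv ?_
  field_simp
  ring

theorem hasDerivAt_inv_hazard {t : ℝ} (hf : HasDerivAt f (-(η t * f t)) t)
    (hS : HasDerivAt S (-f t) t) (hft : f t ≠ 0) : HasDerivAt (fun u => S u / f u) (η t * (S t / f t) - 1) t := by
  refine (hS.div hf hft).congr_deriv ?_
  field_simp
  ring

theorem hasDerivAt_sub_mul_survival {t η' : ℝ} (hf : HasDerivAt f (-(η t * f t)) t)
    (hS : HasDerivAt S (-f t) t) (hη : HasDerivAt η η' t) :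
    HasDerivAt (fun u => f u - η u * S u) (-(η' * S t)) t := by
  refine (hf.sub (hη.mul hS)).congr_deriv ?_
  ring

theorem antitoneOn_sub_mul_survival {D : Set ℝ} (hD : Convex ℝ D)
    (hf : ∀ t ∈ D, HasDerivAt f (-(η t * f t)) t) (hS : ∀ t ∈ D, HasDerivAt S (-f t) t)
    (hSnonneg : ∀ t ∈ D, 0 ≤ S t) (hηd : ∀ t ∈ D, DifferentiableAt ℝ η t)
    (hη : MonotoneOn η (interior D)) : AntitoneOn (fun u => f u - η u * S u) D :=
  antitoneOn_of_hasDerivAt_nonpos hD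
    (fun t ht => hasDerivAt_sub_mul_survival (hf t ht) (hS t ht) (hηd t ht).hasDerivAt)
    fun t ht => neg_nonpos.2 <| mul_nonneg (hη.deriv_nonneg_of_isOpen isOpen_interior ht)
      (hSnonneg t (interior_subset ht))

theorem monotoneOn_sub_mul_survival {D : Set ℝ} (hD : Convex ℝ D)
    (hf : ∀ t ∈ D, HasDerivAt f (-(η t * f t)) t) (hS : ∀ t ∈ D, HasDerivAt S (-f t) t)
    (hSnonneg : ∀ t ∈ D, 0 ≤ S t) (hηd : ∀ t ∈ D, DifferentiableAt ℝ η t)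
    (hη : AntitoneOn η (interior D)) : MonotoneOn (fun u => f u - η u * S u) D :=
  monotoneOn_of_hasDerivAt_nonneg hD
    (fun t ht => hasDerivAt_sub_mul_survival (hf t ht) (hS t ht) (hηd t ht).hasDerivAt)
    fun t ht => neg_nonneg.2 <| mul_nonpos_of_nonpos_of_nonneg
      (hη.deriv_nonpos_of_isOpen isOpen_interior ht) (hSnonneg t (interior_subset ht))

theorem monotoneOn_hazard {D : Set ℝ} (hD : Convex ℝ D)
    (hf : ∀ t ∈ D, HasDerivAt f (-(η t * f t)) t) (hS : ∀ t ∈ D, HasDerivAt S (-f t) t)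
    (hfnonneg : ∀ t ∈ D, 0 ≤ f t) (hSpos : ∀ t ∈ D, 0 < S t)
    (hψ : ∀ t ∈ interior D, 0 ≤ f t - η t * S t) : MonotoneOn (fun u => f u / S u) D :=
  monotoneOn_of_hasDerivAt_nonneg hD
    (fun t ht => hasDerivAt_hazard (hf t ht) (hS t ht) (hSpos t ht).ne') fun t ht =>
    have hSt := hSpos t (interior_subset ht)
    mul_nonneg (div_nonneg (hfnonneg t (interior_subset ht)) hSt.le) (div_nonneg (hψ t ht) hSt.le)

theorem antitoneOn_hazard {D : Set ℝ} (hD : Convex ℝ D)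
    (hf : ∀ t ∈ D, HasDerivAt f (-(η t * f t)) t) (hS : ∀ t ∈ D, HasDerivAt S (-f t) t)
    (hfnonneg : ∀ t ∈ D, 0 ≤ f t) (hSpos : ∀ t ∈ D, 0 < S t)
    (hψ : ∀ t ∈ interior D, f t - η t * S t ≤ 0) : AntitoneOn (fun u => f u / S u) D :=
  antitoneOn_of_hasDerivAt_nonpos hD
    (fun t ht => hasDerivAt_hazard (hf t ht) (hS t ht) (hSpos t ht).ne') fun t ht =>
    have hSt := hSpos t (interior_subset ht)
    mul_nonpos_of_nonneg_of_nonpos (div_nonneg (hfnonneg t (interior_subset ht)) hSt.le)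
      (div_nonpos_of_nonpos_of_nonneg (hψ t ht) hSt.le)

theorem exists_pos_sub_mul_survival {t₀ : ℝ} (ht₀ : 0 < t₀)
    (hf : ∀ t ∈ Ioo 0 t₀, HasDerivAt f (-(η t * f t)) t) (hfpos : ∀ t ∈ Ioo 0 t₀, 0 < f t)
    (hSpos : ∀ t ∈ Ioo 0 t₀, 0 < S t) (hlim : Tendsto f (𝓝[>] 0) (𝓝 0)) :
    ∃ b ∈ Ioo 0 t₀, 0 < f b - η b * S b := by
  by_contra! hψ
  refine not_tendsto_zero_of_antitoneOn ht₀ hfpos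
    (antitoneOn_of_hasDerivAt_nonpos (convex_Ioo 0 t₀) hf fun t ht => ?_) hlim
  rw [interior_Ioo] at ht
  have hηt : 0 < η t :=
    pos_of_mul_pos_left ((hfpos t ht).trans_le (by linarith [hψ t ht])) (hSpos t ht).le
  exact neg_nonpos.2 (mul_pos hηt (hfpos t ht)).le

theorem tendsto_hazard_atTop {c : ℝ} (hf : ∀ t ∈ Ici c, HasDerivAt f (-(η t * f t)) t)
    (hS : ∀ t ∈ Ici c, HasDerivAt S (-f t) t) (hfpos : ∀ t ∈ Ici c, 0 < f t)
    (hSpos : ∀ t ∈ Ici c, 0 < S t) (hψ : MonotoneOn (fun u => f u - η u * S u) (Ici c))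
    (hψc : 0 < f c - η c * S c) :
    Tendsto (fun u => f u / S u) atTop atTop := by
  have hS_anti : AntitoneOn S (Ici c) := antitoneOn_of_hasDerivAt_nonpos (convex_Ici c) hS
    fun u hu => neg_nonpos.2 (hfpos u (interior_subset hu)).le
  set κ := (f c - η c * S c) / S c
  have hκ : 0 < κ := div_pos hψc (hSpos c self_mem_Ici)
  have hgap : ∀ u ∈ Ici c, κ ≤ (f u - η u * S u) / S u := fun u hu =>
    div_le_div₀ (hψc.trans_le (hψ self_mem_Ici hu hu)).le (hψ self_mem_Ici hu hu) (hSpos u hu)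
      (hS_anti self_mem_Ici hu hu)
  have hpos : ∀ u ∈ Ici c, 0 < f u / S u := fun u hu => div_pos (hfpos u hu) (hSpos u hu)
  have hgrowth : ∀ u ∈ Ici c, κ * (f c / S c) * (u - c) ≤ f u / S u - f c / S c :=
    fun u hu => mul_sub_le_sub_of_hasDerivAt_ge_mul hκ.le hpos
      (fun y hy => hasDerivAt_hazard (hf y hy) (hS y hy) (hSpos y hy).ne')
      (fun y hy => by rw [mul_comm]; exact mul_le_mul_of_nonneg_left (hgap y hy) (hpos y hy).le) hu
  have hlinear : Tendsto (fun u => f c / S c + κ * (f c / S c) * (u - c)) atTop atTop :=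
    tendsto_atTop_add_const_left _ _
      ((tendsto_atTop_add_const_right _ (-c) tendsto_id).const_mul_atTop
        (mul_pos hκ (hpos c self_mem_Ici)))
  refine tendsto_atTop_mono' atTop ?_ hlinear
  filter_upwards [eventually_ge_atTop c] with u hu
  linarith [hgrowth u hu]

theorem sub_mul_survival_nonpos {c : ℝ} (hf : ∀ t ∈ Ici c, HasDerivAt f (-(η t * f t)) t)
    (hS : ∀ t ∈ Ici c, HasDerivAt S (-f t) t) (hfpos : ∀ t ∈ Ici c, 0 < f t)
    (hSpos : ∀ t ∈ Ici c, 0 < S t) (hη : AntitoneOn η (Ici c))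
    (hψ : MonotoneOn (fun u => f u - η u * S u) (Ici c)) :
    f c - η c * S c ≤ 0 := by
  by_contra! hψc
  set M := max (η c) 1
  have hM : 0 < M := zero_lt_one.trans_le (le_max_right _ _)
  obtain ⟨a, ha⟩ := ((tendsto_hazard_atTop hf hS hfpos hSpos hψ hψc).eventually_ge_atTop
    (2 * M)).and (eventually_ge_atTop c) |>.exists_forall_of_atTop
  have hIci : Ici a ⊆ Ici c := fun u hu => (ha u hu).2
  have hslope : ∀ u ∈ Ici a, η u * (S u / f u) - 1 ≤ -(1 / 2) := by
    intro u hu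
    have hfu := hfpos u (hIci hu)
    have hSu := hSpos u (hIci hu)
    have hηu : η u ≤ M := (hη self_mem_Ici (hIci hu) (hIci hu)).trans (le_max_left _ _)
    have hhu : 2 * M ≤ f u / S u := (ha u hu).1
    have : M * (S u / f u) ≤ 1 / 2 := by
      rw [le_div_iff₀ hSu] at hhu
      rw [mul_div_assoc', div_le_iff₀ hfu]
      linarith
    nlinarith [div_pos hSu hfu]
  obtain ⟨x, hx, hrx⟩ := exists_nonpos_of_hasDerivAt_le_neg one_half_pos
    (fun u hu => hasDerivAt_inv_hazard (hf u (hIci hu)) (hS u (hIci hu)) (hfpos u (hIci hu)).ne')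
    hslope
  exact hrx.not_gt (div_pos (hSpos x (hIci hx)) (hfpos x (hIci hx)))

theorem exists_sign_change_sub_mul_survival {t₀ : ℝ} (ht₀ : 0 < t₀)
    (hf : ∀ t ∈ Ioi 0, HasDerivAt f (-(η t * f t)) t) (hS : ∀ t ∈ Ioi 0, HasDerivAt S (-f t) t)
    (hfpos : ∀ t ∈ Ioi 0, 0 < f t) (hSpos : ∀ t ∈ Ioi 0, 0 < S t)
    (hηd : ∀ t ∈ Ioi 0, DifferentiableAt ℝ η t) (hinc : MonotoneOn η (Ioo 0 t₀))
    (hdec : AntitoneOn η (Ioi t₀)) (hlim : Tendsto f (𝓝[>] 0) (𝓝 0)) :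
    ∃ t₁, 0 < t₁ ∧ (∀ t ∈ Ioo 0 t₁, 0 < f t - η t * S t) ∧
      ∀ t, t₁ < t → f t - η t * S t ≤ 0 := by
  have hψ_anti := antitoneOn_sub_mul_survival (convex_Ioc 0 t₀) (fun t ht => hf t ht.1)
    (fun t ht => hS t ht.1) (fun t ht => (hSpos t ht.1).le) (fun t ht => hηd t ht.1)
    (by rwa [interior_Ioc])
  have hψ_tail : ∀ c, t₀ < c → f c - η c * S c ≤ 0 := fun c hc =>
    have hc₀ : Ici c ⊆ Ioi 0 := fun u hu => ht₀.trans (hc.trans_le hu)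
    sub_mul_survival_nonpos (fun t ht => hf t (hc₀ ht)) (fun t ht => hS t (hc₀ ht))
      (fun t ht => hfpos t (hc₀ ht)) (fun t ht => hSpos t (hc₀ ht))
      (hdec.mono fun u hu => hc.trans_le hu)
      (monotoneOn_sub_mul_survival (convex_Ici c) (fun t ht => hf t (hc₀ ht))
        (fun t ht => hS t (hc₀ ht)) (fun t ht => (hSpos t (hc₀ ht)).le)
        (fun t ht => hηd t (hc₀ ht)) (hdec.mono (by rw [interior_Ici]; exact Ioi_subset_Ioi hc.le)))
  obtain ⟨b, hb, hψb⟩ := exists_pos_sub_mul_survival ht₀ (fun t ht => hf t ht.1)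
    (fun t ht => hfpos t ht.1) (fun t ht => hSpos t ht.1) hlim
  exact exists_sign_change_of_antitoneOn ⟨hb.1, hb.2.le⟩ hψb hψ_anti hψ_tail

end Hazard

/-- Glaser's lemma: if `η = −(log f)'` is unimodal (strictly increasing then
strictly decreasing) and `f(t) → 0` as `t → 0⁺`, then the hazard rate
`h = f / S` is upside-down bathtub shaped. -/
theorem glaser_lemma (f : ℝ → ℝ)
    (hpos : ∀ t : ℝ, 0 < t → 0 < f t)
    (hsmooth : ContDiffOn ℝ 2 f (Set.Ioi 0))
    (hint : ∫ t in Set.Ioi (0 : ℝ), f t = 1)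
    (hS : ∀ t : ℝ, 0 < t → 0 < ∫ s in Set.Ioi t, f s)
    (η : ℝ → ℝ)
    (hη : ∀ t : ℝ, 0 < t → η t = -deriv (fun s => Real.log (f s)) t)
    (t₀ : ℝ) (ht₀ : 0 < t₀)
    (hinc : StrictMonoOn η (Set.Ioo 0 t₀))
    (hdec : StrictAntiOn η (Set.Ioi t₀))
    (hlim : Filter.Tendsto f (nhdsWithin 0 (Set.Ioi 0)) (nhds 0)) :
    ∃ t₁ : ℝ, 0 < t₁ ∧
      MonotoneOn (fun t => f t / ∫ s in Set.Ioi t, f s) (Set.Ioo 0 t₁) ∧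
      AntitoneOn (fun t => f t / ∫ s in Set.Ioi t, f s) (Set.Ioi t₁) := by
  set S := fun u => ∫ s in Ioi u, f s
  have hf_int : IntegrableOn f (Ioi 0) := by
    by_contra h
    simp [integral_undef h] at hint
  have hfd : ∀ t ∈ Ioi (0 : ℝ), HasDerivAt f (-(η t * f t)) t := fun t ht =>
    hasDerivAt_of_eq_neg_deriv_log (hpos t ht).ne'
      ((hsmooth.differentiableOn two_ne_zero).differentiableAt (Ioi_mem_nhds ht)) (hη t ht)
  have hSd : ∀ t ∈ Ioi (0 : ℝ), HasDerivAt S (-f t) t := fun t ht =>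
    hasDerivAt_integral_Ioi hf_int ht (hsmooth.continuousOn.continuousAt (Ioi_mem_nhds ht))
  have hηd : ∀ t ∈ Ioi (0 : ℝ), DifferentiableAt ℝ η t := fun _ =>
    differentiableAt_of_eq_neg_deriv_log isOpen_Ioi hsmooth (fun u hu => (hpos u hu).ne') hη
  obtain ⟨t₁, ht₁, hψ_pos, hψ_nonpos⟩ := exists_sign_change_sub_mul_survival ht₀ hfd hSd hpos hS
    hηd hinc.monotoneOn hdec.antitoneOn hlim
  have h₁ : Ioi t₁ ⊆ Ioi 0 := Ioi_subset_Ioi ht₁.le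
  refine ⟨t₁, ht₁, monotoneOn_hazard (convex_Ioo 0 t₁) (fun t ht => hfd t ht.1)
    (fun t ht => hSd t ht.1) (fun t ht => (hpos t ht.1).le) (fun t ht => hS t ht.1) ?_,
    antitoneOn_hazard (convex_Ioi t₁) (fun t ht => hfd t (h₁ ht)) (fun t ht => hSd t (h₁ ht))
    (fun t ht => (hpos t (h₁ ht)).le) (fun t ht => hS t (h₁ ht)) ?_⟩
  · rw [interior_Ioo]
    exact fun t ht => (hψ_pos t ht).le
  · rw [interior_Ioi]
    exact hψ_nonpos
end

section
/- The 2×2 matrix K with entries K₁₁ = n ψ'(φ) − n/(λ+φ)², K₁₂ = K₂₁ = n/λ + n/(λ+φ)² (up to the paper's sign convention, take the symmetric matrix with these absolute entries), K₂₂ = n(φ+1)/λ² − n/(λ+φ)², where the diagonal entries are taken as nψ'(φ) − n/(λ+φ)² and n(φ+1)/λ² − n/(λ+φ)², is positive definite for all φ > 0, λ > 0, n ≥ 1. In particular its determinant is positive: (ψ'(φ) − 1/(λ+φ)²)((φ+1)/λ² − 1/(λ+φ)²) − (1/λ + 1/(λ+φ)²)² > 0. -/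
/-- The trigamma function `ψ' = (log Γ)''`. -/
noncomputable def trigamma (x : ℝ) : ℝ :=
  deriv (deriv (fun y => Real.log (Real.Gamma y))) x

/-!
Log-convexity of `Γ` (Bohr–Mollerup) squeezes the digamma function `ψ = (log Γ)'` between
`log y - 1/y` and `log y`, so with `ψ (x + N) = ψ x + ∑_{m<N} 1/(x+m)` the functions
`log (x + N) - ∑_{m<N} 1/(x+m)` converge to `ψ x`. Their derivatives converge uniformly on every
`Ioi a`, `a > 0`, hence `ψ' x = ∑ 1/(x+m)²`. Telescoping against `c y = 1/y + 1/(2y²)`, for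
which `1/y² - (c y - c (y+1)) = 1/(2y²(y+1)²) > 0`, gives `ψ' x > 1/x + 1/(2x²)`, and applied
at `φ + 1` this yields `ψ' φ > 1/φ² + 1/(φ+1) + 1/(2(φ+1)²)`. This bound (but not the bound at
`φ` itself) makes the determinant positive, and the matrix is `n` times a positive definite
`2 × 2` matrix by Sylvester's criterion.
-/

open Real Filter Topology Set Finset

noncomputable def digamma : ℝ → ℝ := deriv fun y => log (Gamma y)

theorem differentiableAt_log_Gamma {x : ℝ} (hx : 0 < x) :
    DifferentiableAt ℝ (fun y => log (Gamma y)) x :=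
  have hx' : ∀ m : ℕ, x ≠ -m := fun m => by linarith [(Nat.cast_nonneg m : (0 : ℝ) ≤ m)]
  (differentiableAt_Gamma hx').log (Gamma_ne_zero hx')

theorem log_Gamma_add_one {x : ℝ} (hx : 0 < x) :
    log (Gamma (x + 1)) = log (Gamma x) + log x := by
  rw [Gamma_add_one hx.ne', log_mul hx.ne' (Gamma_pos_of_pos hx).ne', add_comm]

theorem digamma_add_one {x : ℝ} (hx : 0 < x) : digamma (x + 1) = digamma x + x⁻¹ := by
  have hlog : (fun y => log (Gamma (y + 1))) =ᶠ[𝓝 x] fun y => log (Gamma y) + log y := by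
    filter_upwards [eventually_gt_nhds hx] with y hy using log_Gamma_add_one hy
  rw [digamma, ← deriv_comp_add_const, hlog.deriv_eq,
    deriv_fun_add (differentiableAt_log_Gamma hx) (differentiableAt_log hx.ne'), deriv_log]

theorem digamma_add_nat {x : ℝ} (hx : 0 < x) (N : ℕ) :
    digamma (x + N) = digamma x + ∑ m ∈ range N, (x + m)⁻¹ := by
  induction N with
  | zero => simp
  | succ N ih =>
    rw [Nat.cast_succ, ← add_assoc, digamma_add_one (by positivity), ih, sum_range_succ,
      add_assoc]

theorem digamma_le_log {x : ℝ} (hx : 0 < x) : digamma x ≤ log x := by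
  have h := convexOn_log_Gamma.deriv_le_slope hx (show (0 : ℝ) < x + 1 by linarith)
    (lt_add_one x) (differentiableAt_log_Gamma hx)
  rw [slope_def_field, add_sub_cancel_left, div_one, Function.comp_apply,
    Function.comp_apply, log_Gamma_add_one hx, add_sub_cancel_left] at h
  exact h

theorem log_sub_inv_le_digamma {x : ℝ} (hx : 0 < x) : log x - x⁻¹ ≤ digamma x := by
  have h := convexOn_log_Gamma.slope_le_deriv hx (show (0 : ℝ) < x + 1 by linarith)
    (lt_add_one x) (differentiableAt_log_Gamma (by linarith))
  rw [slope_def_field, add_sub_cancel_left, div_one, Function.comp_apply,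
    Function.comp_apply, log_Gamma_add_one hx, add_sub_cancel_left] at h
  change log x ≤ digamma (x + 1) at h
  linarith [digamma_add_one hx]

theorem tendsto_log_sub_sum_inv {x : ℝ} (hx : 0 < x) :
    Tendsto (fun N : ℕ => log (x + N) - ∑ m ∈ range N, (x + m)⁻¹) atTop (𝓝 (digamma x)) := by
  have hxN : Tendsto (fun N : ℕ => x + N) atTop atTop :=
    tendsto_atTop_add_const_left _ _ tendsto_natCast_atTop_atTop
  have hupper : Tendsto (fun N : ℕ => digamma x + (x + N)⁻¹) atTop (𝓝 (digamma x)) := by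
    simpa using tendsto_const_nhds.add (tendsto_inv_atTop_zero.comp hxN)
  refine tendsto_of_tendsto_of_tendsto_of_le_of_le tendsto_const_nhds hupper (fun N => ?_)
    (fun N => ?_) <;>
  · have hN : 0 < x + N := by positivity
    have := digamma_add_nat hx N
    linarith [digamma_le_log hN, log_sub_inv_le_digamma hN]

theorem summable_inv_add_sq {a : ℝ} (ha : 0 < a) :
    Summable fun m : ℕ => ((a + m) ^ 2)⁻¹ := by
  refine ((summable_one_div_nat_add_rpow a 2).2 one_lt_two).congr fun m => ?_
  rw [abs_of_pos (by positivity), one_div, add_comm, rpow_two]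

theorem tendstoUniformlyOn_inv_add_nat_zero {a : ℝ} (ha : 0 < a) :
    TendstoUniformlyOn (fun (N : ℕ) (y : ℝ) => (y + N)⁻¹) 0 atTop (Ioi a) := by
  rw [Metric.tendstoUniformlyOn_iff]
  intro ε hε
  have haN : Tendsto (fun N : ℕ => (a + N)⁻¹) atTop (𝓝 0) :=
    tendsto_inv_atTop_zero.comp (tendsto_atTop_add_const_left _ _ tendsto_natCast_atTop_atTop)
  filter_upwards [haN.eventually (eventually_lt_nhds hε)] with N hN y (hy : a < y)
  have hy0 : 0 < y := ha.trans hy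
  rw [Pi.zero_apply, dist_zero_left, norm_inv, norm_of_nonneg (by positivity)]
  exact lt_of_le_of_lt (inv_anti₀ (by positivity) (by linarith)) hN

theorem hasDerivAt_digamma {x : ℝ} (hx : 0 < x) :
    HasDerivAt digamma (∑' m : ℕ, ((x + m) ^ 2)⁻¹) x := by
  have hx2 : 0 < x / 2 := half_pos hx
  have hderiv : ∀ (N : ℕ), ∀ y ∈ Ioi (x / 2), HasDerivAt
      (fun z => log (z + N) - ∑ m ∈ range N, (z + m)⁻¹)
      ((y + N)⁻¹ + ∑ m ∈ range N, ((y + m) ^ 2)⁻¹) y := by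
    intro N y (hy : x / 2 < y)
    have hy0 : 0 < y := hx2.trans hy
    have hpos : ∀ m : ℕ, y + m ≠ 0 := fun m => by positivity
    have hlog := (hasDerivAt_log (hpos N)).comp_add_const y (N : ℝ)
    have hinv := HasDerivAt.fun_sum (u := range N) fun m _ =>
      (hasDerivAt_inv (hpos m)).comp_add_const y (m : ℝ)
    exact (hlog.fun_sub hinv).congr_deriv (by rw [sum_neg_distrib, sub_neg_eq_add])
  have hunif : TendstoUniformlyOn
      (fun (N : ℕ) (y : ℝ) => (y + N)⁻¹ + ∑ m ∈ range N, ((y + m) ^ 2)⁻¹)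
      (fun y => ∑' m : ℕ, ((y + m) ^ 2)⁻¹) atTop (Ioi (x / 2)) := by
    have hseries := tendstoUniformlyOn_tsum_nat (f := fun (m : ℕ) (y : ℝ) => ((y + m) ^ 2)⁻¹)
      (summable_inv_add_sq hx2) fun m y (hy : x / 2 < y) => by
        have hy0 : 0 < y := hx2.trans hy
        rw [norm_inv, norm_pow, norm_of_nonneg (by positivity)]
        gcongr
    simpa using (tendstoUniformlyOn_inv_add_nat_zero hx2).fun_add hseries
  exact hasDerivAt_of_tendstoUniformlyOn isOpen_Ioi hunif (Eventually.of_forall hderiv)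
    (fun y hy => tendsto_log_sub_sum_inv (hx2.trans hy)) (half_lt_self hx)

theorem trigamma_eq_tsum {x : ℝ} (hx : 0 < x) : trigamma x = ∑' m : ℕ, ((x + m) ^ 2)⁻¹ :=
  (hasDerivAt_digamma hx).deriv

theorem hasSum_sub_succ_of_antitone {c : ℕ → ℝ} {l : ℝ} (hc : Antitone c)
    (hl : Tendsto c atTop (𝓝 l)) : HasSum (fun n => c n - c (n + 1)) (c 0 - l) := by
  rw [hasSum_iff_tendsto_nat_of_nonneg fun n => sub_nonneg.2 (hc n.le_succ)]
  simpa only [sum_range_sub'] using tendsto_const_nhds.sub hl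

theorem inv_add_inv_two_mul_sq_lt_tsum {x : ℝ} (hx : 0 < x) :
    x⁻¹ + (2 * x ^ 2)⁻¹ < ∑' m : ℕ, ((x + m) ^ 2)⁻¹ := by
  set c : ℕ → ℝ := fun m => (x + m)⁻¹ + (2 * (x + m) ^ 2)⁻¹ with hc_def
  have hc : Antitone c := fun m n hmn => by
    have : (m : ℝ) ≤ n := Nat.cast_le.2 hmn
    simp only [hc_def]
    gcongr
  have hxN : Tendsto (fun m : ℕ => x + m) atTop atTop :=
    tendsto_atTop_add_const_left _ _ tendsto_natCast_atTop_atTop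
  have hc0 : Tendsto c atTop (𝓝 0) := by
    simpa [hc_def] using (tendsto_inv_atTop_zero.comp hxN).add (tendsto_inv_atTop_zero.comp
      (((tendsto_pow_atTop two_ne_zero).comp hxN).const_mul_atTop two_pos))
  have hgap : ∀ m : ℕ,
      ((x + m) ^ 2)⁻¹ - (c m - c (m + 1)) = (2 * (x + m) ^ 2 * (x + m + 1) ^ 2)⁻¹ := by
    intro m
    have : 0 < x + m := by positivity
    simp only [hc_def]
    push_cast
    field_simp
    ring
  have hrem := (summable_inv_add_sq hx).hasSum.sub (hasSum_sub_succ_of_antitone hc hc0)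
  simp only [hgap] at hrem
  have := hasSum_lt (fun m => by positivity) (i := 0) (by positivity) hasSum_zero hrem
  simp only [hc_def, CharP.cast_eq_zero, add_zero, sub_zero] at this
  linarith

theorem lt_trigamma {x : ℝ} (hx : 0 < x) :
    1 / x ^ 2 + 1 / (x + 1) + 1 / (2 * (x + 1) ^ 2) < trigamma x := by
  have h := inv_add_inv_two_mul_sq_lt_tsum (x := x + 1) (by positivity)
  rw [trigamma_eq_tsum hx, (summable_inv_add_sq hx).tsum_eq_zero_add]
  simp only [one_div, CharP.cast_eq_zero, add_zero, Nat.cast_succ, ← add_assoc,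
    add_right_comm x _ (1 : ℝ)] at h ⊢
  linarith

namespace Matrix

theorem posDef_fin_two_of_pos_of_det_pos {a b c : ℝ} (ha : 0 < a)
    (hdet : 0 < a * c - b ^ 2) : (!![a, b; b, c]).PosDef := by
  refine posDef_iff_dotProduct_mulVec.2 ⟨?_, fun x hx => ?_⟩
  · ext i j
    fin_cases i <;> fin_cases j <;> rfl
  have hquad : star x ⬝ᵥ (!![a, b; b, c] *ᵥ x) =
      a * x 0 ^ 2 + 2 * b * x 0 * x 1 + c * x 1 ^ 2 := by
    simp only [dotProduct, Pi.star_apply, star_trivial, mulVec, of_apply, cons_val',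
      cons_val_fin_one, Fin.sum_univ_two, cons_val_zero, cons_val_one]
    ring
  rw [hquad]
  rcases eq_or_ne (x 1) 0 with h1 | h1
  · have h0 : x 0 ≠ 0 := fun h0 => hx (funext fun i => by fin_cases i <;> assumption)
    rw [h1]
    nlinarith [mul_pos ha (sq_pos_of_ne_zero h0)]
  · -- `a (a x₀² + 2b x₀x₁ + c x₁²) = (a x₀ + b x₁)² + (ac - b²) x₁²`
    nlinarith [sq_nonneg (a * x 0 + b * x 1), mul_pos hdet (sq_pos_of_ne_zero h1)]

end Matrix

theorem iwl_fisher_det_pos {φ lam T : ℝ} (hφ : 0 < φ) (hlam : 0 < lam)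
    (hT : 1 / φ ^ 2 + 1 / (φ + 1) + 1 / (2 * (φ + 1) ^ 2) ≤ T) :
    0 < (T - 1 / (lam + φ) ^ 2) * ((φ + 1) / lam ^ 2 - 1 / (lam + φ) ^ 2)
      - (1 / lam + 1 / (lam + φ) ^ 2) ^ 2 := by
  have hB : 0 < (φ + 1) / lam ^ 2 - 1 / (lam + φ) ^ 2 := by
    field_simp
    nlinarith [mul_pos hlam hφ]
  -- clearing denominators leaves a polynomial in `φ, lam` with positive coefficients
  have hbound : 0 < (1 / φ ^ 2 + 1 / (φ + 1) + 1 / (2 * (φ + 1) ^ 2) - 1 / (lam + φ) ^ 2) *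
      ((φ + 1) / lam ^ 2 - 1 / (lam + φ) ^ 2) - (1 / lam + 1 / (lam + φ) ^ 2) ^ 2 := by
    field_simp
    ring_nf
    positivity
  nlinarith [mul_le_mul_of_nonneg_right (sub_le_sub_right hT (1 / (lam + φ) ^ 2)) hB.le]

/-- The Fisher information matrix of the IWL(φ,λ) model with sample size `n`
is positive definite; in particular its determinant is positive. -/
theorem iwl_fisher_posdef (φ lam : ℝ) (hφ : 0 < φ) (hlam : 0 < lam)
    (n : ℕ) (hn : 1 ≤ n) :
    (Matrix.PosDef
        !![(n : ℝ) * trigamma φ - (n : ℝ) / (lam + φ) ^ 2,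
            (n : ℝ) / lam + (n : ℝ) / (lam + φ) ^ 2;
          (n : ℝ) / lam + (n : ℝ) / (lam + φ) ^ 2,
            (n : ℝ) * (φ + 1) / lam ^ 2 - (n : ℝ) / (lam + φ) ^ 2]) ∧
      0 < (trigamma φ - 1 / (lam + φ) ^ 2) *
            ((φ + 1) / lam ^ 2 - 1 / (lam + φ) ^ 2) -
          (1 / lam + 1 / (lam + φ) ^ 2) ^ 2 := by
  have hT := lt_trigamma hφ
  have hdet := iwl_fisher_det_pos hφ hlam hT.le
  refine ⟨?_, hdet⟩
  have hA : 0 < trigamma φ - 1 / (lam + φ) ^ 2 := by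
    have : 1 / (lam + φ) ^ 2 < 1 / φ ^ 2 :=
      one_div_lt_one_div_of_lt (by positivity) (by nlinarith)
    have : 0 < 1 / (φ + 1) + 1 / (2 * (φ + 1) ^ 2) := by positivity
    linarith
  convert (Matrix.posDef_fin_two_of_pos_of_det_pos hA hdet).smul
    (Nat.cast_pos.2 hn : (0 : ℝ) < n) using 1
  ext i j
  fin_cases i <;> fin_cases j <;> simp <;> ring
end
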